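/- Let X be a totally bounded metric space, H a Hilbert space, ρ : C_b(X) → B(H) a bounded *-homomorphism, and T ∈ B(H) an operator such that [T, ρ(f)] is compact for every bounded continuous f. Then for all R, L > 0 the collection {[T, ρ(f)] : f ∈ L-Lip_R(X)} is uniformly approximable. -/

import Mathlib

/-!
The commutator map `f ↦ T * ρ f - ρ f * T` is additive and continuous, hence uniformly
continuous, so it maps the `L`-Lipschitz functions of sup-norm at most `1` (a totally bounded set
by the Arzelà–Ascoli argument: a Lipschitz function is controlled by its values on a finite net of
`X`) onto a totally bounded set of compact operators. Such a set is uniformly approximable: take a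
finite `ε / 2`-net of it and replace each member `A` of the net by a finite-rank operator, the
orthogonal projection of `A` onto the span of a finite net of the image of the unit ball.
-/

open BoundedContinuousFunction

/-- A collection of operators on a Hilbert space is *uniformly approximable* if for every
`ε > 0` there is a common `N` such that every member of the collection is within `ε`
(in operator norm) of an operator of rank at most `N`. -/
def UniformlyApproximable {H : Type*} [NormedAddCommGroup H] [InnerProductSpace ℂ H]
    (𝒜 : Set (H →L[ℂ] H)) : Prop :=
  ∀ ε > (0 : ℝ), ∃ N : ℕ, ∀ T ∈ 𝒜, ∃ k : H →L[ℂ] H,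
    LinearMap.rank (k : H →ₗ[ℂ] H) ≤ (N : Cardinal) ∧ ‖T - k‖ < ε

/-- `f ∈ L-Lip_R(X)`: a bounded continuous function which is `L`-Lipschitz, has sup-norm
at most `1`, and whose support has diameter at most `R`. -/
def MemLLipR {X : Type*} [MetricSpace X] (L R : ℝ) (f : X →ᵇ ℂ) : Prop :=
  LipschitzWith (Real.toNNReal L) ⇑f ∧ ‖f‖ ≤ 1 ∧ Metric.diam (Function.support ⇑f) ≤ R

open Set Metric
open scoped NNReal

theorem Submodule.norm_sub_starProjection_le {𝕜 E : Type*} [RCLike 𝕜] [NormedAddCommGroup E]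
    [InnerProductSpace 𝕜 E] (K : Submodule 𝕜 E) [K.HasOrthogonalProjection] (x : E) {y : E}
    (hy : y ∈ K) : ‖x - K.starProjection x‖ ≤ ‖x - y‖ := by
  rw [K.starProjection_minimal]
  exact ciInf_le ⟨0, forall_mem_range.2 fun _ => norm_nonneg _⟩ (⟨y, hy⟩ : K)

theorem IsCompactOperator.exists_rank_le_norm_sub_lt {𝕜 E F : Type*} [RCLike 𝕜]
    [NormedAddCommGroup E] [NormedSpace 𝕜 E] [NormedAddCommGroup F] [InnerProductSpace 𝕜 F]
    {A : E →L[𝕜] F} (hA : IsCompactOperator A) {ε : ℝ} (hε : 0 < ε) :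
    ∃ (n : ℕ) (k : E →L[𝕜] F), LinearMap.rank (k : E →ₗ[𝕜] F) ≤ n ∧ ‖A - k‖ < ε := by
  have hAball : TotallyBounded (A '' closedBall 0 1) :=
    (hA.isCompact_closure_image_closedBall 1).totallyBounded.subset subset_closure
  obtain ⟨t, htfin, htcov⟩ := totallyBounded_iff.1 hAball (ε / 2) (half_pos hε)
  set K := Submodule.span 𝕜 t
  have : FiniteDimensional 𝕜 K := FiniteDimensional.span_of_finite 𝕜 htfin
  refine ⟨t.ncard, K.starProjection ∘L A, ?_, ?_⟩
  · have hrange : LinearMap.range (K.starProjection ∘L A : E →ₗ[𝕜] F) ≤ K := by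
      rintro _ ⟨x, rfl⟩
      exact K.starProjection_apply_mem (A x)
    calc LinearMap.rank (K.starProjection ∘L A : E →ₗ[𝕜] F)
        ≤ Module.rank 𝕜 K := Submodule.rank_mono hrange
      _ ≤ Cardinal.mk t := rank_span_le t
      _ = t.ncard := (Set.cast_ncard htfin).symm
  · suffices ‖A - K.starProjection ∘L A‖ ≤ ε / 2 by linarith
    refine ContinuousLinearMap.opNorm_le_of_unit_norm (half_pos hε).le fun x hx => ?_
    obtain ⟨y, hyt, hAxy⟩ :=
      mem_iUnion₂.1 (htcov (mem_image_of_mem A (mem_closedBall_zero_iff.2 hx.le)))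
    calc ‖(A - K.starProjection ∘L A) x‖ = ‖A x - K.starProjection (A x)‖ := rfl
      _ ≤ ‖A x - y‖ := K.norm_sub_starProjection_le _ (Submodule.subset_span hyt)
      _ ≤ ε / 2 := (mem_ball_iff_norm.1 hAxy).le

theorem uniformlyApproximable_of_totallyBounded {H : Type*} [NormedAddCommGroup H]
    [InnerProductSpace ℂ H] {𝒜 : Set (H →L[ℂ] H)} (h𝒜 : TotallyBounded 𝒜)
    (hcompact : ∀ A ∈ 𝒜, IsCompactOperator A) : UniformlyApproximable 𝒜 := by
  intro ε hε
  obtain ⟨t, ht𝒜, htfin, htcov⟩ := finite_approx_of_totallyBounded h𝒜 (ε / 2) (half_pos hε)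
  choose! n k hk_rank hk_norm using fun B hB =>
    (hcompact B (ht𝒜 hB)).exists_rank_le_norm_sub_lt (half_pos hε)
  refine ⟨htfin.toFinset.sup n, fun A hA => ?_⟩
  obtain ⟨B, hBt, hAB⟩ := mem_iUnion₂.1 (htcov hA)
  refine ⟨k B, (hk_rank B hBt).trans (Nat.cast_le.2 (Finset.le_sup (htfin.mem_toFinset.2 hBt))),
    ?_⟩
  calc ‖A - k B‖ ≤ ‖A - B‖ + ‖B - k B‖ := norm_sub_le_norm_sub_add_norm_sub _ _ _
    _ < ε / 2 + ε / 2 := add_lt_add (mem_ball_iff_norm.1 hAB) (hk_norm B hBt)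
    _ = ε := add_halves ε

theorem LipschitzWith.dist_le_of_dist_le_on_net {X Y : Type*} [PseudoMetricSpace X]
    [PseudoMetricSpace Y] {C : ℝ≥0} {f g : X → Y} (hf : LipschitzWith C f)
    (hg : LipschitzWith C g) {s : Set X} {δ η : ℝ} (hs : univ ⊆ ⋃ y ∈ s, ball y δ)
    (hfg : ∀ y ∈ s, dist (f y) (g y) ≤ η) (x : X) : dist (f x) (g x) ≤ η + 2 * C * δ := by
  obtain ⟨y, hys, hxy⟩ := mem_iUnion₂.1 (hs (mem_univ x))
  have hCxy : C * dist x y ≤ C * δ := mul_le_mul_of_nonneg_left (mem_ball.1 hxy).le C.2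
  calc dist (f x) (g x) ≤ dist (f x) (f y) + dist (f y) (g y) + dist (g y) (g x) :=
        dist_triangle4 _ _ _ _
    _ ≤ C * dist x y + η + C * dist y x :=
        add_le_add_three (hf.dist_le_mul x y) (hfg y hys) (hg.dist_le_mul y x)
    _ = η + 2 * (C * dist x y) := by rw [dist_comm y x]; ring
    _ ≤ η + 2 * C * δ := by linarith

theorem BoundedContinuousFunction.totallyBounded_setOf_lipschitzWith_norm_le {X E : Type*}
    [PseudoMetricSpace X] [NormedAddCommGroup E] [ProperSpace E]
    (hX : TotallyBounded (univ : Set X)) (C : ℝ≥0) (r : ℝ) :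
    TotallyBounded {f : X →ᵇ E | LipschitzWith C f ∧ ‖f‖ ≤ r} := by
  set 𝒮 := {f : X →ᵇ E | LipschitzWith C f ∧ ‖f‖ ≤ r}
  rw [totallyBounded_iff]
  intro ε hε
  set δ := ε / (4 * (C + 1))
  have hδ : 0 < δ := by positivity
  have hCδ : 2 * C * δ ≤ ε / 2 := by
    have : δ * (4 * (C + 1)) = ε := div_mul_cancel₀ _ (by positivity)
    nlinarith
  obtain ⟨s, hsfin, hsX⟩ := totallyBounded_iff.1 hX δ hδ
  have : Fintype s := hsfin.fintype
  let restrict : (X →ᵇ E) → (s → E) := fun f x => f x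
  have hrestrict : TotallyBounded (restrict '' 𝒮) := by
    refine (isCompact_closedBall (0 : s → E) r).totallyBounded.subset ?_
    rintro _ ⟨f, hf, rfl⟩
    refine mem_closedBall_zero_iff.2 (le_trans ?_ hf.2)
    exact (pi_norm_le_iff_of_nonneg (norm_nonneg f)).2 fun x => f.norm_coe_le_norm x
  obtain ⟨t, ht𝒮, htfin, htcov⟩ :=
    finite_approx_of_totallyBounded hrestrict (ε / 4) (by positivity)
  choose! g hg𝒮 hg using fun y (hy : y ∈ t) => ht𝒮 hy
  refine ⟨g '' t, htfin.image g, fun f hf => ?_⟩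
  obtain ⟨y, hyt, hfy⟩ := mem_iUnion₂.1 (htcov (mem_image_of_mem restrict hf))
  refine mem_iUnion₂.2 ⟨g y, mem_image_of_mem g hyt, mem_ball.2 ?_⟩
  rw [← hg y hyt] at hfy
  have hnet : ∀ x ∈ s, dist (f x) (g y x) ≤ ε / 4 := fun x hx =>
    (dist_le_pi_dist (restrict f) (restrict (g y)) ⟨x, hx⟩).trans (mem_ball.1 hfy).le
  have := (dist_le (by positivity)).2 (hf.1.dist_le_of_dist_le_on_net (hg𝒮 y hyt).1 hsX hnet)
  linarith

/-- If `X` is a totally bounded metric space, `ρ : C_b(X) → B(H)` a bounded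
`*`-homomorphism, and `T ∈ B(H)` has compact commutator `[T, ρ(f)]` with all bounded
continuous `f`, then for all `R, L > 0` the collection `{[T, ρ(f)] : f ∈ L-Lip_R(X)}` is
uniformly approximable. -/
theorem uniformlyApproximable_commutators_of_totallyBounded
    {X : Type*} [MetricSpace X] (htb : TotallyBounded (Set.univ : Set X))
    {H : Type*} [NormedAddCommGroup H] [InnerProductSpace ℂ H] [CompleteSpace H]
    (ρ : (X →ᵇ ℂ) →⋆ₐ[ℂ] (H →L[ℂ] H)) (hρ : Continuous ρ)
    (T : H →L[ℂ] H)
    (hT : ∀ f : X →ᵇ ℂ, IsCompactOperator (T * ρ f - ρ f * T)) :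
    ∀ R > (0 : ℝ), ∀ L > (0 : ℝ),
      UniformlyApproximable {A | ∃ f : X →ᵇ ℂ, MemLLipR L R f ∧ A = T * ρ f - ρ f * T} := by
  intro R _ L _
  let commutator : (X →ᵇ ℂ) →+ (H →L[ℂ] H) :=
    (AddMonoidHom.mulLeft T - AddMonoidHom.mulRight T).comp ρ.toRingHom.toAddMonoidHom
  have hcommutator : UniformContinuous commutator :=
    uniformContinuous_addMonoidHom_of_continuous
      ((continuous_const.mul hρ).sub (hρ.mul continuous_const))
  refine uniformlyApproximable_of_totallyBounded ?_ ?_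
  · refine ((totallyBounded_setOf_lipschitzWith_norm_le htb (Real.toNNReal L) 1).image
      hcommutator).subset ?_
    rintro _ ⟨f, hf, rfl⟩
    exact ⟨f, ⟨hf.1, hf.2.1⟩, rfl⟩
  · rintro _ ⟨f, -, rfl⟩
    exact hT f
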